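/- Fix δ ∈ (0, 1/2], γ, κ ∈ (0,1), α > 0, M > 2/δ and integer k ≥ 3, and let Z̃₁ := α·N₀ + Σ_{i=1}^{N_r} Y_i, where N₀ ∼ Poisson(κ/2), N_r ∼ Poisson(ν_r^{≠}(ℝ)) and the Y_i are i.i.d. with law ν_r^{≠}/ν_r^{≠}(ℝ), all independent. Then there exists a constant C*_{δ,α,M} > 0 depending only on δ, α, M such that (ν_r * μ_{−Z̃₁})((−∞, M]) ≤ γ · C*_{δ,α,M}, where μ_{−Z̃₁} is the law of −Z̃₁. -/

import Mathlib

open MeasureTheory Set Real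
open scoped ENNReal

/-- The measure `ν_r(dy) = (γ/y²) e^{δy} 1{y > M} dy`. -/
noncomputable def nuR (δ γ M : ℝ) : Measure ℝ :=
  volume.withDensity fun y =>
    ENNReal.ofReal (if M < y then γ / y ^ 2 * Real.exp (δ * y) else 0)

/-- The measure `ν_r^{≠}(dy) = (e^y + (k−1)^{−1})^{−1} ν_r(dy)`. -/
noncomputable def nuRNe (δ γ M : ℝ) (k : ℕ) : Measure ℝ :=
  volume.withDensity fun y =>
    ENNReal.ofReal (if M < y then
      (γ / y ^ 2 * Real.exp (δ * y)) / (Real.exp y + 1 / ((k : ℝ) - 1)) else 0)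

/-- The convolution of two measures on `ℝ` (law of the sum of independent samples). -/
noncomputable def mconv (μ ν : Measure ℝ) : Measure ℝ :=
  μ.bind fun x => ν.map (x + ·)

/-- The `n`-fold convolution of a measure on `ℝ`. -/
noncomputable def nconv (μ : Measure ℝ) : ℕ → Measure ℝ
  | 0 => Measure.dirac 0
  | n + 1 => mconv μ (nconv μ n)

/-- `Pois(λ) ⊗ μ`: the law of `Σ_{i=1}^N Y_i` where `N ∼ Poisson(λ)` and the `Y_i`
are i.i.d. with (probability) law `μ`, independent of `N`. -/
noncomputable def compoundPoisson (lam : ℝ) (μ : Measure ℝ) : Measure ℝ :=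
  Measure.sum fun n : ℕ =>
    ENNReal.ofReal (Real.exp (-lam) * lam ^ n / n.factorial) • nconv μ n

/-- The law of `α · N` where `N ∼ Poisson(κ)`. -/
noncomputable def scaledPoissonLaw (κ α : ℝ) : Measure ℝ :=
  Measure.sum fun n : ℕ =>
    ENNReal.ofReal (Real.exp (-κ) * κ ^ n / n.factorial) • Measure.dirac (α * (n : ℝ))

/-- The law of `Z̃₁ := α·N₀ + Σ_{i=1}^{N_r} Y_i`, where `N₀ ∼ Poisson(κ/2)`,
`N_r ∼ Poisson(ν_r^{≠}(ℝ))` and the `Y_i` are i.i.d. with law `ν_r^{≠}/ν_r^{≠}(ℝ)`,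
all independent. -/
noncomputable def Z1Law (δ γ κ α M : ℝ) (k : ℕ) : Measure ℝ :=
  mconv (scaledPoissonLaw (κ / 2) α)
    (compoundPoisson ((nuRNe δ γ M k) Set.univ).toReal
      ((nuRNe δ γ M k Set.univ)⁻¹ • nuRNe δ γ M k))

/-! ### Auxiliary lemmas -/

lemma measurable_map_add_right (ν : Measure ℝ) [SFinite ν] :
    Measurable fun x : ℝ => ν.map (x + ·) := by
  apply Measure.measurable_of_measurable_coe
  intro s hs
  have h1 : ∀ x : ℝ, ν.map (x + ·) s = ν (Prod.mk x ⁻¹' ((fun p : ℝ × ℝ => p.1 + p.2) ⁻¹' s)) := by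
    intro x
    rw [Measure.map_apply (measurable_const_add x) hs]
    rfl
  simp_rw [h1]
  exact measurable_measure_prodMk_left ((measurable_fst.add measurable_snd) hs)

lemma mconv_eq_map_prod (μ ν : Measure ℝ) [SFinite ν] :
    mconv μ ν = (μ.prod ν).map fun p => p.1 + p.2 := by
  ext s hs
  rw [mconv, Measure.bind_apply hs (measurable_map_add_right ν).aemeasurable,
    Measure.map_apply measurable_add hs,
    Measure.prod_apply (measurable_add hs)]
  refine lintegral_congr fun x => ?_
  rw [Measure.map_apply (measurable_const_add x) hs]
  rfl

lemma mconv_apply (μ ν : Measure ℝ) [SFinite ν] {s : Set ℝ} (hs : MeasurableSet s) :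
    mconv μ ν s = ∫⁻ x, ν ((x + ·) ⁻¹' s) ∂μ := by
  rw [mconv, Measure.bind_apply hs (measurable_map_add_right ν).aemeasurable]
  refine lintegral_congr fun x => ?_
  rw [Measure.map_apply (measurable_const_add x) hs]

lemma lintegral_mconv (μ ν : Measure ℝ) [SFinite μ] [SFinite ν] {f : ℝ → ℝ≥0∞}
    (hf : Measurable f) :
    ∫⁻ z, f z ∂(mconv μ ν) = ∫⁻ x, ∫⁻ y, f (x + y) ∂ν ∂μ := by
  rw [mconv_eq_map_prod, lintegral_map hf measurable_add]
  exact lintegral_prod _ ((hf.comp (measurable_fst.add measurable_snd)).aemeasurable)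

/-- The exponential moment `∫ e^{δz} dμ` as a lower integral. -/
noncomputable def expInt (δ : ℝ) (μ : Measure ℝ) : ℝ≥0∞ :=
  ∫⁻ z, ENNReal.ofReal (Real.exp (δ * z)) ∂μ

lemma measurable_expFn (δ : ℝ) :
    Measurable fun z : ℝ => ENNReal.ofReal (Real.exp (δ * z)) := by
  fun_prop

lemma measurable_expFn' (δ c : ℝ) :
    Measurable fun z : ℝ => ENNReal.ofReal (Real.exp (c - δ * z)) := by fun_prop

lemma sfinite_mconv (μ ν : Measure ℝ) [SFinite μ] [SFinite ν] : SFinite (mconv μ ν) := by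
  rw [mconv_eq_map_prod]; infer_instance

lemma sfinite_nconv (μ : Measure ℝ) [SFinite μ] : ∀ n, SFinite (nconv μ n)
  | 0 => by rw [nconv]; infer_instance
  | n + 1 => by
    rw [nconv]
    haveI := sfinite_nconv μ n
    exact sfinite_mconv _ _

lemma expInt_mconv (δ : ℝ) (μ ν : Measure ℝ) [SFinite μ] [SFinite ν] :
    expInt δ (mconv μ ν) = expInt δ μ * expInt δ ν := by
  rw [expInt, lintegral_mconv μ ν (measurable_expFn δ)]
  have h : ∀ x y : ℝ, ENNReal.ofReal (Real.exp (δ * (x + y)))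
      = ENNReal.ofReal (Real.exp (δ * x)) * ENNReal.ofReal (Real.exp (δ * y)) := by
    intro x y
    rw [mul_add, Real.exp_add, ENNReal.ofReal_mul (Real.exp_nonneg _)]
  simp_rw [h, lintegral_const_mul _ (measurable_expFn δ)]
  rw [lintegral_mul_const _ (measurable_expFn δ)]
  rfl

lemma expInt_nconv (δ : ℝ) (μ : Measure ℝ) [SFinite μ] :
    ∀ n, expInt δ (nconv μ n) = (expInt δ μ) ^ n
  | 0 => by
    rw [nconv, expInt, lintegral_dirac' _ (measurable_expFn δ)]
    simp
  | n + 1 => by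
    haveI := sfinite_nconv μ n
    rw [nconv, expInt_mconv, expInt_nconv δ μ n, pow_succ']

lemma markov_bound (δ : ℝ) (hδ : 0 < δ) (Z : Measure ℝ) (t : ℝ) :
    Z (Ici t) ≤ ENNReal.ofReal (Real.exp (-(δ * t))) * expInt δ Z := by
  have h0 : Z (Ici t) = ∫⁻ z in Ici t, 1 ∂Z := by rw [setLIntegral_one]
  rw [h0]
  calc ∫⁻ z in Ici t, 1 ∂Z
      ≤ ∫⁻ z in Ici t,
          ENNReal.ofReal (Real.exp (-(δ * t))) * ENNReal.ofReal (Real.exp (δ * z)) ∂Z := by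
        refine setLIntegral_mono (by fun_prop) fun z hz => ?_
        rw [← ENNReal.ofReal_mul (Real.exp_nonneg _), ← Real.exp_add]
        refine ENNReal.one_le_ofReal.mpr (Real.one_le_exp ?_)
        have : t ≤ z := hz
        nlinarith
    _ ≤ ∫⁻ z, ENNReal.ofReal (Real.exp (-(δ * t))) * ENNReal.ofReal (Real.exp (δ * z)) ∂Z :=
        lintegral_mono' Measure.restrict_le_self le_rfl
    _ = ENNReal.ofReal (Real.exp (-(δ * t))) * expInt δ Z :=
        lintegral_const_mul _ (measurable_expFn δ)

lemma lintegral_Ioi_inv_sq {M c : ℝ} (hM : 0 < M) (hc : 0 ≤ c) :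
    ∫⁻ x in Ioi M, ENNReal.ofReal (c / x ^ 2) = ENNReal.ofReal (c / M) := by
  have hrw : ∀ x ∈ Ioi M, c / x ^ 2 = c * x ^ (-2 : ℝ) := by
    intro x hx
    have hx0 : (0 : ℝ) < x := hM.trans hx
    rw [Real.rpow_neg hx0.le, ← Real.rpow_natCast x 2]
    norm_num [div_eq_mul_inv]
  have hint : IntegrableOn (fun x => c / x ^ 2) (Ioi M) := by
    refine MeasureTheory.IntegrableOn.congr_fun
      ((integrableOn_Ioi_rpow_of_lt (by norm_num : (-2:ℝ) < -1) hM).const_mul c)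
      (fun x hx => (hrw x hx).symm) measurableSet_Ioi
  rw [← ofReal_integral_eq_lintegral_ofReal hint
    (Filter.Eventually.of_forall fun x => by positivity)]
  congr 1
  rw [setIntegral_congr_fun measurableSet_Ioi hrw, integral_const_mul,
    integral_Ioi_rpow_of_lt (by norm_num) hM]
  rw [show (-2 : ℝ) + 1 = -1 by norm_num, Real.rpow_neg_one]
  field_simp

lemma measurable_densR (δ γ M : ℝ) :
    Measurable fun y : ℝ =>
      ENNReal.ofReal (if M < y then γ / y ^ 2 * Real.exp (δ * y) else 0) := by
  apply Measurable.ennreal_ofReal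
  exact Measurable.ite measurableSet_Ioi
    ((measurable_const.div (measurable_id.pow_const 2)).mul
      (Real.measurable_exp.comp (measurable_id.const_mul δ))) measurable_const

lemma measurable_densNe (δ γ M : ℝ) (k : ℕ) :
    Measurable fun y : ℝ => ENNReal.ofReal (if M < y then
      (γ / y ^ 2 * Real.exp (δ * y)) / (Real.exp y + 1 / ((k : ℝ) - 1)) else 0) := by
  apply Measurable.ennreal_ofReal
  exact Measurable.ite measurableSet_Ioi
    (((measurable_const.div (measurable_id.pow_const 2)).mul
      (Real.measurable_exp.comp (measurable_id.const_mul δ))).div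
      (Real.measurable_exp.add measurable_const)) measurable_const

lemma nuR_exp_integral {δ γ M : ℝ} (hγ : 0 ≤ γ) (hM : 0 < M) :
    ∫⁻ x, ENNReal.ofReal (Real.exp (δ * M - δ * x)) ∂(nuR δ γ M)
      = ENNReal.ofReal (γ * Real.exp (δ * M) / M) := by
  rw [nuR, lintegral_withDensity_eq_lintegral_mul _ (measurable_densR δ γ M)
    (measurable_expFn' δ (δ * M))]
  have hpt : ∀ x : ℝ,
      ENNReal.ofReal (if M < x then γ / x ^ 2 * Real.exp (δ * x) else 0)
        * ENNReal.ofReal (Real.exp (δ * M - δ * x))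
      = (Ioi M).indicator (fun x => ENNReal.ofReal (γ * Real.exp (δ * M) / x ^ 2)) x := by
    intro x
    by_cases hx : M < x
    · rw [Set.indicator_of_mem (show x ∈ Ioi M from hx), if_pos hx,
        ← ENNReal.ofReal_mul (by positivity)]
      congr 1
      rw [mul_assoc, ← Real.exp_add, show δ * x + (δ * M - δ * x) = δ * M by ring]
      ring
    · rw [Set.indicator_of_notMem (show x ∉ Ioi M from hx), if_neg hx,
        ENNReal.ofReal_zero, zero_mul]
  refine (lintegral_congr hpt).trans ?_
  rw [lintegral_indicator measurableSet_Ioi]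
  exact lintegral_Ioi_inv_sq hM (by positivity)

lemma nuRNe_exp_le {δ γ M : ℝ} (k : ℕ) (hδ0 : 0 < δ) (hδ : δ ≤ 1 / 2) (hγ0 : 0 ≤ γ)
    (hM : 0 < M) (hk : 3 ≤ k) :
    ∫⁻ x, ENNReal.ofReal (Real.exp (δ * x)) ∂(nuRNe δ γ M k)
      ≤ ENNReal.ofReal (γ / M) := by
  have hk1 : (0 : ℝ) < (k : ℝ) - 1 := by
    have : (3 : ℝ) ≤ (k : ℝ) := by exact_mod_cast hk
    linarith
  rw [nuRNe, lintegral_withDensity_eq_lintegral_mul _ (measurable_densNe δ γ M k) (by fun_prop)]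
  calc ∫⁻ x, ENNReal.ofReal (if M < x then
          (γ / x ^ 2 * Real.exp (δ * x)) / (Real.exp x + 1 / ((k : ℝ) - 1)) else 0)
        * ENNReal.ofReal (Real.exp (δ * x))
      ≤ ∫⁻ x, (Ioi M).indicator (fun x => ENNReal.ofReal (γ / x ^ 2)) x := by
        refine lintegral_mono fun x => ?_
        by_cases hx : M < x
        · rw [Set.indicator_of_mem (show x ∈ Ioi M from hx), if_pos hx,
            ← ENNReal.ofReal_mul (by positivity)]
          apply ENNReal.ofReal_le_ofReal
          have hx0 : (0 : ℝ) < x := hM.trans hx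
          have hE : Real.exp (δ * x) * Real.exp (δ * x) ≤ Real.exp x := by
            rw [← Real.exp_add]
            exact Real.exp_le_exp.mpr (by nlinarith)
          have hden : (0 : ℝ) < Real.exp x + 1 / ((k : ℝ) - 1) := by positivity
          have hfrac : Real.exp (δ * x) * Real.exp (δ * x) / (Real.exp x + 1 / ((k : ℝ) - 1))
              ≤ 1 := by
            rw [div_le_one hden]
            have h1 : (0 : ℝ) ≤ 1 / ((k : ℝ) - 1) := by positivity
            linarith
          calc γ / x ^ 2 * Real.exp (δ * x) / (Real.exp x + 1 / ((k : ℝ) - 1))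
                * Real.exp (δ * x)
              = γ / x ^ 2 * (Real.exp (δ * x) * Real.exp (δ * x)
                  / (Real.exp x + 1 / ((k : ℝ) - 1))) := by ring
            _ ≤ γ / x ^ 2 * 1 := by
                apply mul_le_mul_of_nonneg_left hfrac (by positivity)
            _ = γ / x ^ 2 := by ring
        · rw [Set.indicator_of_notMem (show x ∉ Ioi M from hx), if_neg hx,
            ENNReal.ofReal_zero, zero_mul]
    _ = ENNReal.ofReal (γ / M) := by
        rw [lintegral_indicator measurableSet_Ioi]
        exact lintegral_Ioi_inv_sq hM hγ0

/-- Fix `δ ∈ (0,1/2]`, `α > 0`, `M > 2/δ`.  There is a constant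
`C*_{δ,α,M} > 0`, depending only on `δ, α, M`, such that for all `γ, κ ∈ (0,1)` and
integers `k ≥ 3`, `(ν_r * μ_{−Z̃₁})((−∞, M]) ≤ γ · C*_{δ,α,M}`. -/
theorem stmt11 (δ α M : ℝ) (hδ0 : 0 < δ) (hδ : δ ≤ 1 / 2) (hα : 0 < α)
    (hM : 2 / δ < M) :
    ∃ C : ℝ, 0 < C ∧
      ∀ (γ κ : ℝ) (k : ℕ),
        γ ∈ Ioo (0 : ℝ) 1 → κ ∈ Ioo (0 : ℝ) 1 → 3 ≤ k →
        mconv (nuR δ γ M) (Measure.map Neg.neg (Z1Law δ γ κ α M k)) (Iic M)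
          ≤ ENNReal.ofReal (γ * C) := by
  have hM0 : 0 < M := lt_trans (by positivity) hM
  set S₁ := ∑' n : ℕ, (Real.exp (δ * α) / 2) ^ n / n.factorial with hS₁def
  set S₂ := ∑' n : ℕ, (1 / M) ^ n / n.factorial with hS₂def
  have hS₁0 : 0 < S₁ :=
    Summable.tsum_pos (Real.summable_pow_div_factorial _) (fun n => by positivity) 0 (by norm_num)
  have hS₂0 : 0 < S₂ :=
    Summable.tsum_pos (Real.summable_pow_div_factorial _) (fun n => by positivity) 0 (by norm_num)
  refine ⟨Real.exp (δ * M) / M * (S₁ * S₂), by positivity, ?_⟩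
  intro γ κ k hγ hκ hk
  obtain ⟨hγ0, hγ1⟩ := hγ
  obtain ⟨hκ0, hκ1⟩ := hκ
  haveI hsR : SFinite (nuR δ γ M) := by unfold nuR; infer_instance
  haveI hsNe : SFinite (nuRNe δ γ M k) := by unfold nuRNe; infer_instance
  set mass := nuRNe δ γ M k Set.univ with hmassdef
  set μbar := mass⁻¹ • nuRNe δ γ M k with hμbardef
  haveI : SFinite μbar := by rw [hμbardef]; infer_instance
  haveI hnc : ∀ n, SFinite (nconv μbar n) := sfinite_nconv μbar
  haveI hP2 : SFinite (compoundPoisson mass.toReal μbar) := by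
    unfold compoundPoisson; infer_instance
  haveI hP1 : SFinite (scaledPoissonLaw (κ / 2) α) := by
    unfold scaledPoissonLaw; infer_instance
  haveI hZ : SFinite (Z1Law δ γ κ α M k) := by
    unfold Z1Law; exact sfinite_mconv _ _
  -- exponential moment bounds
  have hJ : expInt δ (nuRNe δ γ M k) ≤ ENNReal.ofReal (1 / M) := by
    refine le_trans (nuRNe_exp_le k hδ0 hδ hγ0.le hM0 hk) ?_
    apply ENNReal.ofReal_le_ofReal
    gcongr
  have hμbarJ : expInt δ μbar = mass⁻¹ * expInt δ (nuRNe δ γ M k) := by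
    rw [hμbardef, expInt, lintegral_smul_measure]; rfl
  have hE1 : expInt δ (scaledPoissonLaw (κ / 2) α) ≤ ENNReal.ofReal S₁ := by
    rw [scaledPoissonLaw, expInt, lintegral_sum_measure]
    have hterm : ∀ n : ℕ,
        ∫⁻ z, ENNReal.ofReal (Real.exp (δ * z))
          ∂(ENNReal.ofReal (Real.exp (-(κ/2)) * (κ/2) ^ n / n.factorial)
              • Measure.dirac (α * (n : ℝ)))
        ≤ ENNReal.ofReal ((Real.exp (δ * α) / 2) ^ n / n.factorial) := by
      intro n
      rw [lintegral_smul_measure, lintegral_dirac' _ (measurable_expFn δ), smul_eq_mul,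
        ← ENNReal.ofReal_mul (by positivity)]
      apply ENNReal.ofReal_le_ofReal
      have he : Real.exp (δ * (α * (n : ℝ))) = Real.exp (δ * α) ^ n := by
        rw [show δ * (α * (n:ℝ)) = (n:ℝ) * (δ * α) by ring, Real.exp_nat_mul]
      rw [he]
      have h1 : Real.exp (-(κ/2)) ≤ 1 := Real.exp_le_one_iff.mpr (by linarith)
      have h2 : (κ/2) ^ n ≤ (1/2 : ℝ) ^ n := pow_le_pow_left₀ (by linarith) (by linarith) n
      have h3 : Real.exp (-(κ/2)) * (κ/2) ^ n ≤ 1 * (1/2 : ℝ) ^ n :=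
        mul_le_mul h1 h2 (by positivity) (by norm_num)
      calc Real.exp (-(κ/2)) * (κ/2) ^ n / (n.factorial : ℝ) * Real.exp (δ * α) ^ n
          = (Real.exp (-(κ/2)) * (κ/2) ^ n) * (Real.exp (δ * α) ^ n / n.factorial) := by
            ring
        _ ≤ (1 * (1/2 : ℝ) ^ n) * (Real.exp (δ * α) ^ n / n.factorial) :=
            mul_le_mul_of_nonneg_right h3 (by positivity)
        _ = (Real.exp (δ * α) / 2) ^ n / n.factorial := by
            simp only [div_pow]; ring
    calc ∑' n : ℕ, ∫⁻ z, ENNReal.ofReal (Real.exp (δ * z))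
            ∂(ENNReal.ofReal (Real.exp (-(κ/2)) * (κ/2) ^ n / n.factorial)
                • Measure.dirac (α * (n : ℝ)))
        ≤ ∑' n : ℕ, ENNReal.ofReal ((Real.exp (δ * α) / 2) ^ n / n.factorial) :=
          ENNReal.tsum_le_tsum hterm
      _ = ENNReal.ofReal S₁ :=
          (ENNReal.ofReal_tsum_of_nonneg (fun n => by positivity)
            (Real.summable_pow_div_factorial _)).symm
  have hE2 : expInt δ (compoundPoisson mass.toReal μbar) ≤ ENNReal.ofReal S₂ := by
    set m := mass.toReal with hmdef
    have hm0 : 0 ≤ m := ENNReal.toReal_nonneg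
    calc expInt δ (compoundPoisson m μbar)
        = ∑' n : ℕ, ENNReal.ofReal (Real.exp (-m) * m ^ n / n.factorial)
            * expInt δ (nconv μbar n) := by
          rw [compoundPoisson, expInt, lintegral_sum_measure]
          exact tsum_congr fun n => lintegral_smul_measure _ _
      _ = ∑' n : ℕ, ENNReal.ofReal (Real.exp (-m) * m ^ n / n.factorial)
            * (expInt δ μbar) ^ n :=
          tsum_congr fun n => by rw [expInt_nconv]
      _ ≤ ∑' n : ℕ, ENNReal.ofReal ((1 / M) ^ n / n.factorial) := by
          refine ENNReal.tsum_le_tsum fun n => ?_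
          have hc1 : ENNReal.ofReal (Real.exp (-m) * m ^ n / n.factorial)
              ≤ ENNReal.ofReal m ^ n * ENNReal.ofReal (1 / (n.factorial : ℝ)) := by
            rw [← ENNReal.ofReal_pow hm0, ← ENNReal.ofReal_mul (by positivity)]
            apply ENNReal.ofReal_le_ofReal
            have h1 : Real.exp (-m) ≤ 1 := Real.exp_le_one_iff.mpr (by linarith)
            calc Real.exp (-m) * m ^ n / (n.factorial : ℝ)
                ≤ 1 * m ^ n / (n.factorial : ℝ) := by gcongr
              _ = m ^ n * (1 / (n.factorial : ℝ)) := by ring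
          have hc2 : (expInt δ μbar) ^ n
              ≤ mass⁻¹ ^ n * (ENNReal.ofReal (1 / M)) ^ n := by
            rw [← mul_pow]
            refine pow_le_pow_left' ?_ n
            rw [hμbarJ]
            exact mul_le_mul' le_rfl hJ
          calc ENNReal.ofReal (Real.exp (-m) * m ^ n / n.factorial) * (expInt δ μbar) ^ n
              ≤ (ENNReal.ofReal m ^ n * ENNReal.ofReal (1 / (n.factorial : ℝ)))
                  * (mass⁻¹ ^ n * (ENNReal.ofReal (1 / M)) ^ n) := mul_le_mul' hc1 hc2
            _ = (ENNReal.ofReal m * mass⁻¹) ^ n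
                  * (ENNReal.ofReal (1 / (n.factorial : ℝ))
                      * (ENNReal.ofReal (1 / M)) ^ n) := by ring
            _ ≤ 1 ^ n * (ENNReal.ofReal (1 / (n.factorial : ℝ))
                  * (ENNReal.ofReal (1 / M)) ^ n) := by
                gcongr
                refine le_trans (mul_le_mul_left ENNReal.ofReal_toReal_le _) ?_
                exact ENNReal.mul_inv_le_one mass
            _ = ENNReal.ofReal ((1 / M) ^ n / n.factorial) := by
                rw [one_pow, one_mul, ← ENNReal.ofReal_pow (by positivity),
                  ← ENNReal.ofReal_mul (by positivity)]
                congr 1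
                ring
      _ = ENNReal.ofReal S₂ :=
          (ENNReal.ofReal_tsum_of_nonneg (fun n => by positivity)
            (Real.summable_pow_div_factorial _)).symm
  have hE : expInt δ (Z1Law δ γ κ α M k) ≤ ENNReal.ofReal (S₁ * S₂) := by
    rw [Z1Law, expInt_mconv]
    calc expInt δ (scaledPoissonLaw (κ / 2) α)
          * expInt δ (compoundPoisson ((nuRNe δ γ M k) Set.univ).toReal
              ((nuRNe δ γ M k Set.univ)⁻¹ • nuRNe δ γ M k))
        ≤ ENNReal.ofReal S₁ * ENNReal.ofReal S₂ := mul_le_mul' hE1 hE2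
      _ = ENNReal.ofReal (S₁ * S₂) := (ENNReal.ofReal_mul hS₁0.le).symm
  haveI : SFinite ((Z1Law δ γ κ α M k).map Neg.neg) := inferInstance
  rw [mconv_apply _ _ measurableSet_Iic]
  calc ∫⁻ x, (Z1Law δ γ κ α M k).map Neg.neg ((x + ·) ⁻¹' Iic M) ∂(nuR δ γ M)
      ≤ ∫⁻ x, ENNReal.ofReal (Real.exp (δ * M - δ * x)) * ENNReal.ofReal (S₁ * S₂)
          ∂(nuR δ γ M) := by
        refine lintegral_mono fun x => ?_
        have hset : ((x + ·) ⁻¹' Iic M) = Iic (M - x) := by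
          ext w
          simp only [mem_preimage, mem_Iic]
          constructor <;> intro h <;> linarith
        have hneg : (Neg.neg : ℝ → ℝ) ⁻¹' Iic (M - x) = Ici (x - M) := by
          ext z
          simp only [mem_preimage, mem_Iic, mem_Ici]
          constructor <;> intro h <;> linarith
        rw [hset, Measure.map_apply measurable_neg measurableSet_Iic, hneg]
        refine le_trans (markov_bound δ hδ0 _ (x - M)) ?_
        rw [show -(δ * (x - M)) = δ * M - δ * x by ring]
        exact mul_le_mul' le_rfl hE
    _ = (∫⁻ x, ENNReal.ofReal (Real.exp (δ * M - δ * x)) ∂(nuR δ γ M))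
          * ENNReal.ofReal (S₁ * S₂) :=
        lintegral_mul_const _ (measurable_expFn' δ (δ * M))
    _ = ENNReal.ofReal (γ * Real.exp (δ * M) / M) * ENNReal.ofReal (S₁ * S₂) := by
        rw [nuR_exp_integral hγ0.le hM0]
    _ = ENNReal.ofReal (γ * (Real.exp (δ * M) / M * (S₁ * S₂))) := by
        rw [← ENNReal.ofReal_mul (by positivity)]
        congr 1
        ring
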